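/- Let L > 0, Δ > 0 with LΔ ≤ 2, and let M = 1/Δ be an even positive integer. Define f₁(x) = 1 + Lx for 0 ≤ x ≤ Δ/2 and f₁(x) = 1 + L(Δ − x) for Δ/2 ≤ x ≤ Δ; define f₋₁(x) = 1 − Lx for 0 ≤ x ≤ Δ/2 and f₋₁(x) = 1 − L(Δ − x) for Δ/2 ≤ x ≤ Δ. For z = (z₀,…,z_{M/2−1}) ∈ {−1,+1}^{M/2}, define f_q : [0,1] → ℝ piecewise by f_q(x) = f_{z_i}(x − 2iΔ) for x ∈ [2iΔ, (2i+1)Δ] and f_q(x) = f_{−z_i}(x − (2i+1)Δ) for x ∈ [(2i+1)Δ, 2(i+1)Δ], for i = 0,…,M/2−1. Then for every z, f_q is nonnegative, L-Lipschitz on [0,1], and ∫₀¹ f_q(x) dx = 1, i.e., f_q is a probability density in 𝒫([0,1]; L). -/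

import Mathlib

open MeasureTheory intervalIntegral

/-!
On the block `[kΔ, (k+1)Δ]` the density is `1 + σₖ L · tent`, where `tent` is the distance to the
nearer end of the block and `σₖ = ±1` (`z_i` on block `2i`, `-z_i` on block `2i+1`). Hence
`|f_q - 1| ≤ L · tent ≤ LΔ/2 ≤ 1`, which gives nonnegativity. Inside a block `f_q` is `L`-Lipschitz
because `tent` is `1`-Lipschitz; across blocks one passes through the block ends, where `f_q = 1`.
Each block contributes `Δ + σₖ LΔ²/4` to the integral, and the signs of consecutive blocks cancel.
-/

/-- The tent perturbation on `[0, Δ]` with sign `s`: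
`f_s(x) = 1 + sLx` for `0 ≤ x ≤ Δ/2` and `f_s(x) = 1 + sL(Δ − x)` for `Δ/2 ≤ x ≤ Δ`
(`s = 1` gives `f₁`, `s = −1` gives `f₋₁`). -/
noncomputable def ftent (L Δ s x : ℝ) : ℝ :=
  if x ≤ Δ / 2 then 1 + s * L * x else 1 + s * L * (Δ - x)

/-- The density `f_q` corresponding to the sign pattern `z`: on `[2iΔ, (2i+1)Δ]` it equals
`f_{z_i}(x − 2iΔ)`, and on `[(2i+1)Δ, 2(i+1)Δ]` it equals `f_{−z_i}(x − (2i+1)Δ)`. -/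
noncomputable def fq (L Δ : ℝ) (z : ℕ → ℝ) (x : ℝ) : ℝ :=
  let j : ℕ := ⌊x / Δ⌋₊
  if j % 2 = 0 then ftent L Δ (z (j / 2)) (x - 2 * (j / 2 : ℕ) * Δ)
  else ftent L Δ (-(z (j / 2))) (x - (2 * (j / 2 : ℕ) + 1) * Δ)

noncomputable def fqSign (z : ℕ → ℝ) (j : ℕ) : ℝ :=
  if j % 2 = 0 then z (j / 2) else -z (j / 2)

def tent (a b x : ℝ) : ℝ := min (x - a) (b - x)

section Tent

variable {a b x : ℝ}

lemma tent_nonneg (hx : x ∈ Set.Icc a b) : 0 ≤ tent a b x :=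
  le_min (sub_nonneg.2 hx.1) (sub_nonneg.2 hx.2)

lemma tent_le_half_sub (a b x : ℝ) : tent a b x ≤ (b - a) / 2 := by
  unfold tent
  linarith [min_le_left (x - a) (b - x), min_le_right (x - a) (b - x)]

lemma tent_le_sub_left (a b x : ℝ) : tent a b x ≤ x - a := min_le_left _ _

lemma tent_le_sub_right (a b x : ℝ) : tent a b x ≤ b - x := min_le_right _ _

lemma tent_left (hab : a ≤ b) : tent a b a = 0 := by
  simp [tent, hab]

lemma tent_right (hab : a ≤ b) : tent a b b = 0 := by
  simp [tent, hab]

lemma abs_tent_sub_tent_le (a b x y : ℝ) : |tent a b x - tent a b y| ≤ |x - y| := by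
  refine (abs_min_sub_min_le_max _ _ _ _).trans (max_le ?_ ?_)
  · rw [sub_sub_sub_cancel_right]
  · rw [sub_sub_sub_cancel_left, abs_sub_comm]

lemma continuous_tent (a b : ℝ) : Continuous (tent a b) := by
  unfold tent
  fun_prop

lemma integral_tent (hab : a ≤ b) : ∫ x in a..b, tent a b x = (b - a) ^ 2 / 4 := by
  set m := (a + b) / 2 with hm
  have hint := continuous_tent a b
  rw [← integral_add_adjacent_intervals (hint.intervalIntegrable a m)
    (hint.intervalIntegrable m b)]
  have h₁ : ∫ x in a..m, tent a b x = ∫ x in a..m, (x - a) := integral_congr fun x hx => by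
    rw [Set.uIcc_of_le (by linarith [hm])] at hx
    exact min_eq_left (by linarith [hx.2, hm])
  have h₂ : ∫ x in m..b, tent a b x = ∫ x in m..b, (b - x) := integral_congr fun x hx => by
    rw [Set.uIcc_of_le (by linarith [hm])] at hx
    exact min_eq_right (by linarith [hx.1, hm])
  rw [h₁, h₂, integral_comp_sub_right (fun x => x), integral_comp_sub_left (fun x => x)]
  simp only [integral_id]
  ring

end Tent

lemma ftent_eq_tent (L Δ s x : ℝ) : ftent L Δ s x = 1 + s * L * tent 0 Δ x := by
  unfold ftent tent
  split_ifs with h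
  · rw [min_eq_left (by linarith)]; ring
  · rw [min_eq_right (by linarith)]

lemma fq_eq_tent_floor (L Δ : ℝ) (z : ℕ → ℝ) (x : ℝ) :
    fq L Δ z x = 1 + fqSign z ⌊x / Δ⌋₊ * L *
      tent (⌊x / Δ⌋₊ * Δ) ((⌊x / Δ⌋₊ + 1) * Δ) x := by
  simp only [fq, fqSign]
  generalize ⌊x / Δ⌋₊ = j
  obtain ⟨i, rfl | rfl⟩ := Nat.even_or_odd' j
  · have hdiv : 2 * i / 2 = i := by omega
    simp only [Nat.mul_mod_right, hdiv, if_true, ftent_eq_tent, tent]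
    push_cast
    ring_nf
  · have hdiv : (2 * i + 1) / 2 = i := by omega
    have hmod : (2 * i + 1) % 2 = 1 := by omega
    simp only [hmod, hdiv, one_ne_zero, if_false, ftent_eq_tent, tent]
    push_cast
    ring_nf

lemma fq_eq_of_mem_block {L Δ : ℝ} {z : ℕ → ℝ} (hΔ : 0 < Δ) {k : ℕ} {x : ℝ}
    (hx : x ∈ Set.Icc (k * Δ) ((k + 1) * Δ)) :
    fq L Δ z x = 1 + fqSign z k * L * tent (k * Δ) ((k + 1) * Δ) x := by
  have hk : (0 : ℝ) ≤ k * Δ := by positivity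
  rcases hx.2.lt_or_eq with hlt | rfl
  · have hfloor : ⌊x / Δ⌋₊ = k := by
      rw [Nat.floor_eq_iff (div_nonneg (hk.trans hx.1) hΔ.le), le_div_iff₀ hΔ, div_lt_iff₀ hΔ]
      exact ⟨hx.1, hlt⟩
    rw [fq_eq_tent_floor, hfloor]
  · -- the right end lies in the next block for `⌊·⌋₊`, but both tents vanish there
    have hfloor : ⌊(k + 1) * Δ / Δ⌋₊ = k + 1 := by
      rw [mul_div_cancel_right₀ _ hΔ.ne']
      exact_mod_cast Nat.floor_natCast (k + 1)
    rw [fq_eq_tent_floor, hfloor, tent_right (by linarith), Nat.cast_succ,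
      tent_left (by linarith), mul_zero, mul_zero]

lemma exists_lt_mem_Icc_mul {Δ x : ℝ} {M : ℕ} (hΔ : 0 < Δ) (hM : M ≠ 0)
    (hx : x ∈ Set.Icc 0 (M * Δ)) : ∃ k < M, x ∈ Set.Icc (k * Δ) ((k + 1) * Δ) := by
  rcases hx.2.lt_or_eq with hlt | rfl
  · have hx0 : 0 ≤ x / Δ := div_nonneg hx.1 hΔ.le
    refine ⟨⌊x / Δ⌋₊, (Nat.floor_lt hx0).2 ((div_lt_iff₀ hΔ).2 hlt), ?_, ?_⟩
    · exact (le_div_iff₀ hΔ).1 (Nat.floor_le hx0)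
    · exact ((div_lt_iff₀ hΔ).1 (Nat.lt_floor_add_one _)).le
  · refine ⟨M - 1, by omega, ?_, ?_⟩ <;>
      rw [Nat.cast_pred (Nat.pos_of_ne_zero hM)] <;> nlinarith

lemma abs_fqSign_le_one {z : ℕ → ℝ} {M : ℕ} (hM : Even M)
    (hz : ∀ i < M / 2, z i = 1 ∨ z i = -1) {k : ℕ} (hk : k < M) : |fqSign z k| ≤ 1 := by
  obtain ⟨n, rfl⟩ := hM
  rcases hz (k / 2) (by omega) with h | h <;> unfold fqSign <;> split_ifs <;> simp [h]

lemma sum_range_fqSign_two_mul (z : ℕ → ℝ) (n : ℕ) :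
    ∑ k ∈ Finset.range (2 * n), fqSign z k = 0 := by
  induction n with
  | zero => simp
  | succ n ih =>
    have h₁ : fqSign z (2 * n) = z n := by simp [fqSign]
    have h₂ : fqSign z (2 * n + 1) = -z n := by
      simp only [fqSign, show (2 * n + 1) / 2 = n by omega]
      simp
    rw [Nat.mul_succ, Finset.sum_range_succ, Finset.sum_range_succ, ih, h₁, h₂]
    ring

section Blocks

variable {L Δ : ℝ} {z : ℕ → ℝ} {k l : ℕ} {x y : ℝ}

lemma abs_fq_sub_one_le (hΔ : 0 < Δ) (hL : 0 ≤ L) (hσ : |fqSign z k| ≤ 1)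
    (hx : x ∈ Set.Icc (k * Δ) ((k + 1) * Δ)) :
    |fq L Δ z x - 1| ≤ L * tent (k * Δ) ((k + 1) * Δ) x := by
  have ht := tent_nonneg hx
  rw [fq_eq_of_mem_block hΔ hx, add_sub_cancel_left, abs_mul, abs_mul, abs_of_nonneg hL,
    abs_of_nonneg ht, mul_assoc]
  exact mul_le_of_le_one_left (mul_nonneg hL ht) hσ

lemma fq_nonneg_of_mem_block (hΔ : 0 < Δ) (hL : 0 ≤ L) (hLΔ : L * Δ ≤ 2)
    (hσ : |fqSign z k| ≤ 1) (hx : x ∈ Set.Icc (k * Δ) ((k + 1) * Δ)) : 0 ≤ fq L Δ z x := by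
  have hhalf : L * tent (k * Δ) ((k + 1) * Δ) x ≤ L * (Δ / 2) := by
    refine mul_le_mul_of_nonneg_left ((tent_le_half_sub _ _ x).trans_eq ?_) hL
    ring
  linarith [(abs_le.1 (abs_fq_sub_one_le hΔ hL hσ hx)).1]

lemma abs_fq_sub_fq_le_of_mem_block (hΔ : 0 < Δ) (hL : 0 ≤ L) (hσ : |fqSign z k| ≤ 1)
    (hx : x ∈ Set.Icc (k * Δ) ((k + 1) * Δ)) (hy : y ∈ Set.Icc (k * Δ) ((k + 1) * Δ)) :
    |fq L Δ z x - fq L Δ z y| ≤ L * |x - y| := by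
  rw [fq_eq_of_mem_block hΔ hx, fq_eq_of_mem_block hΔ hy, add_sub_add_left_eq_sub, ← mul_sub,
    abs_mul, abs_mul, abs_of_nonneg hL, mul_assoc]
  exact (mul_le_of_le_one_left (by positivity) hσ).trans
    (mul_le_mul_of_nonneg_left (abs_tent_sub_tent_le _ _ x y) hL)

lemma abs_fq_sub_fq_le_of_lt (hΔ : 0 < Δ) (hL : 0 ≤ L) (hkl : k < l)
    (hσk : |fqSign z k| ≤ 1) (hσl : |fqSign z l| ≤ 1)
    (hx : x ∈ Set.Icc (k * Δ) ((k + 1) * Δ)) (hy : y ∈ Set.Icc (l * Δ) ((l + 1) * Δ)) :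
    |fq L Δ z x - fq L Δ z y| ≤ L * |x - y| := by
  have hgap : ((k : ℝ) + 1) * Δ ≤ l * Δ := by
    gcongr
    exact_mod_cast hkl
  have hx' := (abs_fq_sub_one_le hΔ hL hσk hx).trans
    (mul_le_mul_of_nonneg_left (tent_le_sub_right _ _ x) hL)
  have hy' := (abs_fq_sub_one_le hΔ hL hσl hy).trans
    (mul_le_mul_of_nonneg_left (tent_le_sub_left _ _ y) hL)
  calc |fq L Δ z x - fq L Δ z y| ≤ |fq L Δ z x - 1| + |fq L Δ z y - 1| :=
        (abs_sub_le _ 1 _).trans_eq (by rw [abs_sub_comm 1])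
    _ ≤ L * (y - x) := by linarith [mul_le_mul_of_nonneg_left hgap hL]
    _ ≤ L * |x - y| := mul_le_mul_of_nonneg_left (by rw [abs_sub_comm]; exact le_abs_self _) hL

end Blocks

lemma abs_fq_sub_fq_le {L Δ : ℝ} {z : ℕ → ℝ} {M : ℕ} {x y : ℝ} (hΔ : 0 < Δ) (hL : 0 ≤ L)
    (hM : M ≠ 0) (hσ : ∀ k < M, |fqSign z k| ≤ 1)
    (hx : x ∈ Set.Icc 0 (M * Δ)) (hy : y ∈ Set.Icc 0 (M * Δ)) :
    |fq L Δ z x - fq L Δ z y| ≤ L * |x - y| := by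
  obtain ⟨k, hk, hxk⟩ := exists_lt_mem_Icc_mul hΔ hM hx
  obtain ⟨l, hl, hyl⟩ := exists_lt_mem_Icc_mul hΔ hM hy
  rcases lt_trichotomy k l with hkl | rfl | hlk
  · exact abs_fq_sub_fq_le_of_lt hΔ hL hkl (hσ k hk) (hσ l hl) hxk hyl
  · exact abs_fq_sub_fq_le_of_mem_block hΔ hL (hσ k hk) hxk hyl
  · rw [abs_sub_comm, abs_sub_comm x]
    exact abs_fq_sub_fq_le_of_lt hΔ hL hlk (hσ l hl) (hσ k hk) hyl hxk

section Integral

variable {L Δ : ℝ} {z : ℕ → ℝ} (k : ℕ)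

lemma intervalIntegrable_fq_block (hΔ : 0 < Δ) :
    IntervalIntegrable (fq L Δ z) volume (k * Δ) ((k + 1) * Δ) := by
  have hcont : Continuous fun x => 1 + fqSign z k * L * tent (k * Δ) ((k + 1) * Δ) x := by
    have := continuous_tent (k * Δ) ((k + 1) * Δ)
    fun_prop
  refine (intervalIntegrable_congr fun x hx => ?_).2 (hcont.intervalIntegrable _ _)
  rw [Set.uIoc_of_le (by gcongr; linarith)] at hx
  exact fq_eq_of_mem_block hΔ (Set.Ioc_subset_Icc_self hx)

lemma integral_fq_block (hΔ : 0 < Δ) :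
    ∫ x in k * Δ..(k + 1) * Δ, fq L Δ z x = Δ + fqSign z k * (L * Δ ^ 2 / 4) := by
  have hle : (k : ℝ) * Δ ≤ (k + 1) * Δ := by gcongr; linarith
  rw [integral_congr fun x hx => fq_eq_of_mem_block hΔ (by rwa [Set.uIcc_of_le hle] at hx),
    integral_add intervalIntegrable_const
      ((continuous_tent _ _).intervalIntegrable _ _ |>.const_mul _),
    intervalIntegral.integral_const, intervalIntegral.integral_const_mul, integral_tent hle,
    smul_eq_mul]
  ring

end Integral

lemma integral_fq {L Δ : ℝ} {z : ℕ → ℝ} {M : ℕ} (hΔ : 0 < Δ) (hM : Even M)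
    (hMΔ : M * Δ = 1) : ∫ x in (0 : ℝ)..1, fq L Δ z x = 1 := by
  obtain ⟨n, rfl⟩ := hM
  have hblocks := sum_integral_adjacent_intervals (μ := volume) (f := fq L Δ z)
    (a := fun k : ℕ => k * Δ) (n := n + n) fun k _ => by
      simpa only [Nat.cast_succ] using intervalIntegrable_fq_block k hΔ
  simp only [Nat.cast_zero, zero_mul, hMΔ, Nat.cast_succ, integral_fq_block _ hΔ] at hblocks
  rw [← hblocks, Finset.sum_add_distrib, ← Finset.sum_mul, ← two_mul, sum_range_fqSign_two_mul,
    zero_mul, add_zero, Finset.sum_const, Finset.card_range, nsmul_eq_mul, two_mul, hMΔ]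

theorem fq_is_lipschitz_density_general (L Δ : ℝ) (M : ℕ) (z : ℕ → ℝ)
    (hL : 0 < L) (hΔ : 0 < Δ) (hLΔ : L * Δ ≤ 2)
    (hM : Even M) (hMΔ : (M : ℝ) = 1 / Δ)
    (hz : ∀ i < M / 2, z i = 1 ∨ z i = -1) :
    (∀ x ∈ Set.Icc (0 : ℝ) 1, 0 ≤ fq L Δ z x) ∧
      (∀ x ∈ Set.Icc (0 : ℝ) 1, ∀ y ∈ Set.Icc (0 : ℝ) 1,
        |fq L Δ z x - fq L Δ z y| ≤ L * |x - y|) ∧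
      (∫ x in (0 : ℝ)..1, fq L Δ z x) = 1 := by
  have hMΔ₁ : (M : ℝ) * Δ = 1 := by rw [hMΔ, one_div_mul_cancel hΔ.ne']
  have hM₀ : M ≠ 0 := by
    rintro rfl
    simp at hMΔ₁
  have hunit : Set.Icc (0 : ℝ) 1 = Set.Icc 0 (M * Δ) := by rw [hMΔ₁]
  have hσ : ∀ k < M, |fqSign z k| ≤ 1 := fun k => abs_fqSign_le_one hM hz
  refine ⟨fun x hx => ?_, fun x hx y hy => ?_, integral_fq hΔ hM hMΔ₁⟩
  · rw [hunit] at hx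
    obtain ⟨k, hk, hxk⟩ := exists_lt_mem_Icc_mul hΔ hM₀ hx
    exact fq_nonneg_of_mem_block hΔ hL.le hLΔ (hσ k hk) hxk
  · rw [hunit] at hx hy
    exact abs_fq_sub_fq_le hΔ hL.le hM₀ hσ hx hy

/-- for `L > 0`, `Δ > 0` with `LΔ ≤ 2`, `M = 1/Δ` an even positive integer,
and any sign pattern `z ∈ {−1,+1}^{M/2}`, the function `f_q` is nonnegative on `[0,1]`,
`L`-Lipschitz on `[0,1]`, and integrates to `1`, i.e. it is a density in `𝒫([0,1]; L)`. -/
theorem fq_is_lipschitz_density (L Δ : ℝ) (M : ℕ) (z : ℕ → ℝ)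
    (hL : 0 < L) (hΔ : 0 < Δ) (hLΔ : L * Δ ≤ 2)
    (hM : Even M) (hMpos : 0 < M) (hMΔ : (M : ℝ) = 1 / Δ)
    (hz : ∀ i < M / 2, z i = 1 ∨ z i = -1) :
    (∀ x ∈ Set.Icc (0 : ℝ) 1, 0 ≤ fq L Δ z x) ∧
      (∀ x ∈ Set.Icc (0 : ℝ) 1, ∀ y ∈ Set.Icc (0 : ℝ) 1,
        |fq L Δ z x - fq L Δ z y| ≤ L * |x - y|) ∧
      (∫ x in (0 : ℝ)..1, fq L Δ z x) = 1 :=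
  fq_is_lipschitz_density_general L Δ M z hL hΔ hLΔ hM hMΔ hz
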